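/- arXiv:1409.3863 — 4 statements merged into one kernel-verified Lean document; each statement's English description precedes it below -/
import Mathlib

section
/- Let {m_I} and {M_I} be families of positive real numbers indexed by 2-element subsets I of {1,...,n}, with m_I ≤ M_I. Suppose that for all distinct i,j, every k ∈ ℕ and every sequence t_1,...,t_k in {1,...,n}\{i,j} with consecutive terms distinct, m_{i,j} ≤ M_{i,t_1} + M_{t_1,t_2} + ... + M_{t_k,j}. Then there exists a positive-weighted finite simple connected graph G with {1,...,n} among its vertices such that D_I(G) ∈ [m_I, M_I] for every 2-subset I of {1,...,n}. -/
/-- `chainSum M i j [t₁,...,t_k] = M i t₁ + M t₁ t₂ + ⋯ + M t_k j`; for the empty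
list it is `M i j`. -/
def chainSum {n : ℕ} (M : Fin n → Fin n → ℝ) : Fin n → Fin n → List (Fin n) → ℝ
  | i, j, [] => M i j
  | i, j, a :: l => M i a + chainSum M a j l

open SimpleGraph

private lemma key {n : ℕ} (M : Fin n → Fin n → ℝ) (hM : ∀ i j, M i j = M j i) :
    ∀ {i j : Fin n} (p : (⊤ : SimpleGraph (Fin n)).Walk i j), 0 < p.length →
      (p.edges.map (Sym2.lift ⟨M, hM⟩)).sum
        = chainSum M i j p.support.tail.dropLast := by
  intro i j p
  induction p with
  | nil => simp
  | @cons u a j h q ih =>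
    intro _
    cases q with
    | nil => simp [chainSum]
    | @cons a b j h' q' =>
      have ihv := ih (by simp)
      simp only [SimpleGraph.Walk.support_cons, List.tail_cons] at ihv
      rw [SimpleGraph.Walk.edges_cons, List.map_cons, List.sum_cons,
        SimpleGraph.Walk.support_cons, List.tail_cons,
        SimpleGraph.Walk.support_cons,
        List.dropLast_cons_of_ne_nil (SimpleGraph.Walk.support_ne_nil q')]
      simp only [chainSum, Sym2.lift_mk]
      rw [ihv]

private lemma interior_props {n : ℕ} {i j : Fin n} (hij : i ≠ j)
    (p : (⊤ : SimpleGraph (Fin n)).Walk i j) (hp : p.IsPath) :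
    (∀ a ∈ p.support.tail.dropLast, a ≠ i ∧ a ≠ j) ∧
      p.support.tail.dropLast.Chain' (· ≠ ·) := by
  have hnodup : p.support.Nodup := hp.support_nodup
  have hcons : p.support = i :: p.support.tail := p.support_eq_cons
  have hjt : j ∈ p.support.tail := SimpleGraph.Walk.end_mem_tail_support_of_ne hij p
  have htne : p.support.tail ≠ [] := List.ne_nil_of_mem hjt
  have htnodup : p.support.tail.Nodup := by
    rw [hcons] at hnodup; exact hnodup.of_cons
  have hinotin : i ∉ p.support.tail := by
    rw [hcons] at hnodup; exact (List.nodup_cons.mp hnodup).1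
  have hlast : p.support.tail.getLast htne = j := by
    rw [List.getLast_tail]
    exact p.getLast_support
  have hjnotin : j ∉ p.support.tail.dropLast := by
    intro hj
    have hsplit := List.dropLast_append_getLast htne
    rw [hlast] at hsplit
    have := htnodup
    rw [← hsplit] at this
    rcases List.nodup_append'.mp this with ⟨_, _, hdisj⟩
    exact hdisj hj (by simp)
  constructor
  · intro a ha
    have ha' : a ∈ p.support.tail := (List.dropLast_sublist _).subset ha
    exact ⟨fun h => hinotin (h ▸ ha'), fun h => hjnotin (h ▸ ha)⟩
  · exact ((htnodup.sublist (List.dropLast_sublist _))).isChain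

theorem stmt_6 (n : ℕ) (m M : Fin n → Fin n → ℝ)
    (hmsym : ∀ i j, m i j = m j i) (hMsym : ∀ i j, M i j = M j i)
    (hmpos : ∀ i j : Fin n, i ≠ j → 0 < m i j)
    (hmM : ∀ i j : Fin n, i ≠ j → m i j ≤ M i j)
    (hchain : ∀ i j : Fin n, i ≠ j → ∀ l : List (Fin n),
      (∀ a ∈ l, a ≠ i ∧ a ≠ j) → l.Chain' (· ≠ ·) → m i j ≤ chainSum M i j l) :
    ∃ (V : Type) (_ : Fintype V) (G : SimpleGraph V) (w : Sym2 V → ℝ) (f : Fin n → V)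
      (D : V → V → ℝ),
      G.Connected ∧ Function.Injective f ∧ (∀ e ∈ G.edgeSet, 0 < w e) ∧
      (∀ i j : V,
        IsLeast {x : ℝ | ∃ p : G.Walk i j, p.IsPath ∧ x = (p.edges.map w).sum} (D i j)) ∧
      ∀ i j : Fin n, i ≠ j → D (f i) (f j) ∈ Set.Icc (m i j) (M i j) := by
  rcases Nat.eq_zero_or_pos n with h0 | hn
  · subst h0
    refine ⟨Fin 1, inferInstance, ⊥, fun _ => 1, Fin.elim0, fun _ _ => 0, ?_, ?_, ?_, ?_, ?_⟩
    · constructor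
      intro u v
      rw [Subsingleton.elim u v]
    · exact fun i => i.elim0
    · simp
    · intro i j
      obtain rfl : i = j := Subsingleton.elim i j
      constructor
      · exact ⟨SimpleGraph.Walk.nil, SimpleGraph.Walk.IsPath.nil, by simp⟩
      · rintro x ⟨p, hp, rfl⟩
        have : (⟨p, hp⟩ : SimpleGraph.Path ⊥ i i) = SimpleGraph.Path.nil :=
          SimpleGraph.Path.loop_eq _
        have hpn : p = SimpleGraph.Walk.nil := congrArg Subtype.val this
        simp [hpn]
    · exact fun i => i.elim0
  · have : NeZero n := ⟨hn.ne'⟩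
    set G : SimpleGraph (Fin n) := ⊤ with hG
    set w : Sym2 (Fin n) → ℝ := Sym2.lift ⟨M, hMsym⟩ with hw
    have hconn : G.Connected := SimpleGraph.connected_top
    have hne : ∀ i j : Fin n, (Finset.univ.image
        (fun p : G.Path i j => ((p : G.Walk i j).edges.map w).sum)).Nonempty := by
      intro i j
      obtain ⟨q⟩ := hconn.preconnected i j
      exact ⟨_, Finset.mem_image.mpr ⟨q.toPath, Finset.mem_univ _, rfl⟩⟩
    set D : Fin n → Fin n → ℝ := fun i j => (Finset.univ.image
        (fun p : G.Path i j => ((p : G.Walk i j).edges.map w).sum)).min' (hne i j) with hD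
    have hleast : ∀ i j : Fin n,
        IsLeast {x : ℝ | ∃ p : G.Walk i j, p.IsPath ∧ x = (p.edges.map w).sum} (D i j) := by
      intro i j
      constructor
      · obtain ⟨p, _, hp⟩ := Finset.mem_image.mp (Finset.min'_mem _ (hne i j))
        exact ⟨p.1, p.2, hp.symm⟩
      · rintro x ⟨p, hp, rfl⟩
        exact Finset.min'_le _ _
          (Finset.mem_image_of_mem _ (Finset.mem_univ (⟨p, hp⟩ : G.Path i j)))
    refine ⟨Fin n, inferInstance, G, w, id, D, hconn, Function.injective_id,
      ?_, hleast, ?_⟩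
    · intro e he
      induction e with
      | h a b =>
        have hab : a ≠ b := by
          simpa [hG] using he
        simpa [hw] using lt_of_lt_of_le (hmpos a b hab) (hmM a b hab)
    · intro i j hij
      constructor
      · -- m i j ≤ D i j : lower bound on every path
        obtain ⟨p, hp, hval⟩ := (hleast i j).1
        show m i j ≤ D i j
        rw [hval]
        have hlen : 0 < p.length := by
          by_contra h
          push_neg at h
          interval_cases hl : p.length
          · exact hij (SimpleGraph.Walk.eq_of_length_eq_zero hl)
        rw [key M hMsym p hlen]
        obtain ⟨hmem, hch⟩ := interior_props hij p hp
        exact hchain i j hij _ hmem hch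
      · -- D i j ≤ M i j : direct edge
        have hadj : G.Adj i j := by simp [hG, hij]
        have := (hleast i j).2 (by
          refine ⟨SimpleGraph.Walk.cons hadj SimpleGraph.Walk.nil, ?_, rfl⟩
          simp [SimpleGraph.Walk.isPath_def, hij])
        show D i j ≤ M i j
        simpa [hw] using this
end

section
/- (Carver's theorem, other direction) Let L_1,...,L_s be affine (degree 1) polynomials in x_1,...,x_t. If the system L_1 > 0, ..., L_s > 0 is unsolvable over ℝ^t, then there exist nonnegative constants c_1,...,c_{s+1}, at least one positive, such that c_1 L_1 + ... + c_s L_s + c_{s+1} is identically zero. -/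
theorem stmt_9 (s t : ℕ) (A : Fin s → Fin t → ℝ) (b : Fin s → ℝ)
    (h : ¬ ∃ x : Fin t → ℝ, ∀ i, 0 < ∑ j, A i j * x j + b i) :
    ∃ (c : Fin s → ℝ) (c' : ℝ),
      (∀ i, 0 ≤ c i) ∧ 0 ≤ c' ∧ ((∃ i, 0 < c i) ∨ 0 < c') ∧
      ∀ x : Fin t → ℝ, (∑ i, c i * (∑ j, A i j * x j + b i)) + c' = 0 := by
  classical
  set L : (Fin t → ℝ) → (Fin s → ℝ) := fun x i => ∑ j, A i j * x j + b i with hL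
  set S : Set (Fin s → ℝ) := Set.pi Set.univ (fun _ => Set.Ioi (0:ℝ)) with hSdef
  have hSmem : ∀ y : Fin s → ℝ, y ∈ S ↔ ∀ i, 0 < y i := by
    intro y; simp [hSdef, Set.mem_pi]
  have hSconv : Convex ℝ S := convex_pi fun i _ => convex_Ioi 0
  have hSopen : IsOpen S := isOpen_set_pi Set.finite_univ fun i _ => isOpen_Ioi
  have hTconv : Convex ℝ (Set.range L) := by
    rintro y1 ⟨x1, rfl⟩ y2 ⟨x2, rfl⟩ a a' ha ha' hab
    refine ⟨a • x1 + a' • x2, ?_⟩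
    funext i
    simp only [hL, Pi.add_apply, Pi.smul_apply, smul_eq_mul]
    have hsum : ∑ j, A i j * (a * x1 j + a' * x2 j)
        = a * ∑ j, A i j * x1 j + a' * ∑ j, A i j * x2 j := by
      rw [Finset.mul_sum, Finset.mul_sum, ← Finset.sum_add_distrib]
      exact Finset.sum_congr rfl fun j _ => by ring
    rw [hsum]
    linear_combination (-b i) * hab
  have hdisj : Disjoint S (Set.range L) := by
    rw [Set.disjoint_left]
    rintro y hyS ⟨x, rfl⟩
    exact h ⟨x, fun i => (hSmem _).mp hyS i⟩
  obtain ⟨f, u, hSf, hTf⟩ := geometric_hahn_banach_open hSconv hSopen hTconv hdisj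
  -- f expressed via coordinates
  have hf : ∀ y : Fin s → ℝ, f y = ∑ i, y i * f (Pi.single i 1) := by
    intro y
    have hy : y = ∑ i, y i • (Pi.single i 1 : Fin s → ℝ) := by
      funext k
      simp [Finset.sum_apply, Pi.single_apply, Finset.sum_ite_eq']
    calc f y = f (∑ i, y i • (Pi.single i 1 : Fin s → ℝ)) := by rw [← hy]
      _ = ∑ i, y i * f (Pi.single i 1) := by
          rw [map_sum]; simp [smul_eq_mul]
  have hone : (fun _ : Fin s => (1:ℝ)) ∈ S := (hSmem _).mpr fun i => one_pos
  have hf1 : f (fun _ => (1:ℝ)) < u := hSf _ hone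
  -- u ≥ 0
  have hu0 : 0 ≤ u := by
    by_contra hu
    push_neg at hu
    have hmem : ∀ ε : ℝ, 0 < ε → (fun _ : Fin s => ε) ∈ S := fun ε hε =>
      (hSmem _).mpr fun i => hε
    have hval : ∀ ε : ℝ, f (fun _ : Fin s => ε) = ε * f (fun _ => (1:ℝ)) := by
      intro ε
      have : (fun _ : Fin s => ε) = ε • (fun _ : Fin s => (1:ℝ)) := by
        funext k; simp
      rw [this, map_smul, smul_eq_mul]
    rcases le_or_gt 0 (f (fun _ => (1:ℝ))) with hge | hlt
    · have := hSf _ (hmem 1 one_pos)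
      rw [hval] at this
      nlinarith
    · have hne : f (fun _ => (1:ℝ)) ≠ 0 := ne_of_lt hlt
      set ε := u / (2 * f (fun _ => (1:ℝ))) with hε
      have hεpos : 0 < ε := div_pos_of_neg_of_neg hu (by linarith)
      have hlt2 := hSf _ (hmem ε hεpos)
      rw [hval] at hlt2
      have hεval : ε * f (fun _ => (1:ℝ)) = u / 2 := by
        rw [hε]; field_simp
      rw [hεval] at hlt2
      linarith
  set c : Fin s → ℝ := fun i => -f (Pi.single i 1) with hc
  have hcnn : ∀ i, 0 ≤ c i := by
    intro i
    by_contra hci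
    push_neg at hci
    have hfe : 0 < f (Pi.single i 1) := by simp [hc] at hci; linarith
    have hdivpos : 0 < (u - f (fun _ => (1:ℝ))) / f (Pi.single i 1) :=
      div_pos (by linarith) hfe
    set M : ℝ := (u - f (fun _ => (1:ℝ))) / f (Pi.single i 1) + 1 with hM
    have hMpos : 0 < M := by rw [hM]; linarith
    have hmem : ((fun _ : Fin s => (1:ℝ)) + M • (Pi.single i 1 : Fin s → ℝ)) ∈ S := by
      refine (hSmem _).mpr fun k => ?_
      simp only [Pi.add_apply, Pi.smul_apply, Pi.single_apply, smul_eq_mul]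
      by_cases hk : k = i
      · rw [if_pos hk]; nlinarith
      · rw [if_neg hk]; norm_num
    have hlt := hSf _ hmem
    rw [map_add, map_smul, smul_eq_mul] at hlt
    have hval : M * f (Pi.single i 1) = u - f (fun _ => (1:ℝ)) + f (Pi.single i 1) := by
      rw [hM]; field_simp
    rw [hval] at hlt
    linarith
  -- the affine form
  set d : Fin t → ℝ := fun j => ∑ i, c i * A i j with hd
  set e : ℝ := ∑ i, c i * b i with he
  have key : ∀ x : Fin t → ℝ, ∑ i, c i * (∑ j, A i j * x j + b i) = (∑ j, d j * x j) + e := by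
    intro x
    have h1 : ∀ i, c i * (∑ j, A i j * x j + b i) = (∑ j, (c i * A i j) * x j) + c i * b i := by
      intro i
      rw [mul_add, Finset.mul_sum]
      congr 1
      exact Finset.sum_congr rfl fun j _ => by ring
    calc ∑ i, c i * (∑ j, A i j * x j + b i)
        = ∑ i, ((∑ j, (c i * A i j) * x j) + c i * b i) :=
          Finset.sum_congr rfl fun i _ => h1 i
      _ = (∑ i, ∑ j, (c i * A i j) * x j) + ∑ i, c i * b i := Finset.sum_add_distrib
      _ = (∑ j, ∑ i, (c i * A i j) * x j) + e := by rw [Finset.sum_comm]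
      _ = (∑ j, d j * x j) + e := by
          congr 1
          exact Finset.sum_congr rfl fun j _ => by
            rw [hd, Finset.sum_mul]
  have hbound : ∀ x : Fin t → ℝ, (∑ j, d j * x j) + e ≤ -u := by
    intro x
    have hfu := hTf (L x) ⟨x, rfl⟩
    rw [hf] at hfu
    have heq : ∑ i, L x i * f (Pi.single i 1) = -((∑ j, d j * x j) + e) := by
      rw [← key x, ← Finset.sum_neg_distrib]
      exact Finset.sum_congr rfl fun i _ => by simp [hc, hL]; ring
    rw [heq] at hfu
    linarith
  have hd0 : ∀ j, d j = 0 := by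
    intro j
    by_contra hdj
    have hx := hbound (Pi.single j ((-u - e + 1) / d j) : Fin t → ℝ)
    have hsum : ∑ k, d k * (Pi.single j ((-u - e + 1) / d j) : Fin t → ℝ) k
        = -u - e + 1 := by
      rw [Finset.sum_eq_single j]
      · rw [Pi.single_eq_same]; field_simp
      · intro k _ hk; simp [Pi.single_eq_of_ne hk]
      · intro hj; exact absurd (Finset.mem_univ j) hj
    rw [hsum] at hx
    linarith
  have hee : e ≤ -u := by
    have := hbound 0
    simpa using this
  refine ⟨c, -e, hcnn, by linarith, ?_, ?_⟩
  · -- nontriviality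
    by_contra hcon
    push_neg at hcon
    obtain ⟨hc0, he0⟩ := hcon
    have hcall : ∀ i, c i = 0 := fun i => le_antisymm (hc0 i) (hcnn i)
    have hfe0 : ∀ i, f (Pi.single i 1) = 0 := by
      intro i
      have h2 := hcall i
      simp only [hc] at h2
      linarith
    have hf0 : f (fun _ => (1:ℝ)) = 0 := by
      rw [hf]; simp [hfe0]
    have hupos : 0 < u := by rw [hf0] at hf1; exact hf1
    have hub : u ≤ f (L 0) := hTf _ ⟨0, rfl⟩
    rw [hf] at hub
    simp [hfe0] at hub
    linarith
  · intro x
    rw [key x]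
    have hz : ∑ j, d j * x j = 0 :=
      Finset.sum_eq_zero fun j _ => by rw [hd0 j, zero_mul]
    rw [hz]
    ring
end

section
/- Let L_1,...,L_r be affine (degree 1) polynomials in real variables x_1,...,x_t, let 1 ≤ s ≤ r, and let z_1,...,z_s be positive integers. Suppose that for every ε > 0 the system L_i(x) > -z_i·ε for i=1,...,s together with L_i(x) ≥ 0 for i=s+1,...,r is solvable. Then the system L_i(x) ≥ 0 for all i=1,...,r is solvable. -/
private lemma cone_caratheodory {E : Type*} [AddCommGroup E] [Module ℝ E]
    {ι : Type*} [Fintype ι] (v : ι → E) :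
    ∀ (n : ℕ) (c : ι → ℝ), (∀ i, 0 ≤ c i) →
      (Finset.univ.filter fun i => c i ≠ 0).card ≤ n →
    ∃ (S : Finset ι) (c' : ι → ℝ), (∀ i, 0 ≤ c' i) ∧ (∀ i, i ∉ S → c' i = 0) ∧
      LinearIndependent ℝ (fun i : S => v i) ∧ ∑ i, c' i • v i = ∑ i, c i • v i := by
  classical
  intro n
  induction n with
  | zero =>
    intro c hc hcard
    have hzero : ∀ i, c i = 0 := by
      intro i
      by_contra hi
      have hmem : i ∈ Finset.univ.filter fun i => c i ≠ 0 := by simp [hi]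
      have := Finset.card_pos.mpr ⟨i, hmem⟩
      omega
    have : IsEmpty ((∅ : Finset ι) : Type _) := ⟨fun x => absurd x.2 (Finset.notMem_empty _)⟩
    exact ⟨∅, c, hc, fun i _ => hzero i, linearIndependent_empty_type, rfl⟩
  | succ n ih =>
    intro c hc hcard
    set S : Finset ι := Finset.univ.filter fun i => c i ≠ 0 with hSdef
    by_cases hli : LinearIndependent ℝ (fun i : S => v i)
    · refine ⟨S, c, hc, fun i hi => ?_, hli, rfl⟩
      by_contra hne
      exact hi (by simp [hSdef, hne])
    · obtain ⟨g, hg0, j, hgj⟩ := Fintype.not_linearIndependent_iff.mp hli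
      have key : ∀ g' : ι → ℝ, (∀ i, i ∉ S → g' i = 0) → (∑ i, g' i • v i = 0) →
          (∃ i, 0 < g' i) →
          ∃ (T : Finset ι) (c' : ι → ℝ), (∀ i, 0 ≤ c' i) ∧ (∀ i, i ∉ T → c' i = 0) ∧
            LinearIndependent ℝ (fun i : T => v i) ∧ ∑ i, c' i • v i = ∑ i, c i • v i := by
        rintro g' hg'supp hg'sum ⟨i₁, hi₁⟩
        set T : Finset ι := S.filter fun i => 0 < g' i with hTdef
        have hTne : T.Nonempty := by
          refine ⟨i₁, Finset.mem_filter.mpr ⟨?_, hi₁⟩⟩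
          by_contra hns
          exact absurd (hg'supp i₁ hns) (by linarith)
        obtain ⟨i₀, hi₀T, hi₀min⟩ := T.exists_min_image (fun i => c i / g' i) hTne
        have hg'i₀ : 0 < g' i₀ := (Finset.mem_filter.mp hi₀T).2
        set τ : ℝ := c i₀ / g' i₀ with hτdef
        have hτ0 : 0 ≤ τ := div_nonneg (hc i₀) hg'i₀.le
        set c' : ι → ℝ := fun i => c i - τ * g' i with hc'def
        have hc'0 : ∀ i, 0 ≤ c' i := by
          intro i
          rcases le_or_gt (g' i) 0 with hgi | hgi
          · have h1 : τ * g' i ≤ 0 := mul_nonpos_of_nonneg_of_nonpos hτ0 hgi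
            have h2 := hc i
            simp only [hc'def]; linarith
          · have hiS : i ∈ S := by
              by_contra hns
              exact absurd (hg'supp i hns) (by linarith)
            have hmin := hi₀min i (Finset.mem_filter.mpr ⟨hiS, hgi⟩)
            rw [hτdef] at *
            rw [div_le_div_iff₀ hg'i₀ hgi] at hmin
            have : (c i₀ / g' i₀) * g' i ≤ c i := by
              rw [div_mul_eq_mul_div, div_le_iff₀ hg'i₀]
              linarith
            simp only [hc'def]; linarith
        have hc'i₀ : c' i₀ = 0 := by
          simp only [hc'def, hτdef]
          field_simp
          ring
        have hsum' : ∑ i, c' i • v i = ∑ i, c i • v i := by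
          simp only [hc'def, sub_smul, mul_smul, Finset.sum_sub_distrib, ← Finset.smul_sum,
            hg'sum, smul_zero, sub_zero]
        have hsupp' : (Finset.univ.filter fun i => c' i ≠ 0) ⊆ S.erase i₀ := by
          intro i hi
          simp only [Finset.mem_filter] at hi
          refine Finset.mem_erase.mpr ⟨?_, ?_⟩
          · rintro rfl; exact hi.2 hc'i₀
          · by_contra hns
            have h1 := hg'supp i hns
            have h2 : c i = 0 := by
              by_contra hci
              exact hns (by simp [hSdef, hci])
            exact hi.2 (by simp [hc'def, h1, h2])
        have hcard' : (Finset.univ.filter fun i => c' i ≠ 0).card ≤ n := by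
          have h1 := Finset.card_le_card hsupp'
          have h2 : (S.erase i₀).card < S.card :=
            Finset.card_erase_lt_of_mem (Finset.mem_filter.mp hi₀T).1
          omega
        obtain ⟨T', c'', h1, h2, h3, h4⟩ := ih c' hc'0 hcard'
        exact ⟨T', c'', h1, h2, h3, h4.trans hsum'⟩
      set g' : ι → ℝ := fun i => if h : i ∈ S then g ⟨i, h⟩ else 0 with hg'def
      have hg'supp : ∀ i, i ∉ S → g' i = 0 := fun i hi => by simp [hg'def, hi]
      have hg'sum : ∑ i, g' i • v i = 0 := by
        have h1 : ∑ i, g' i • v i = ∑ i ∈ S, g' i • v i :=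
          (Finset.sum_subset (Finset.subset_univ S) (fun i _ hi => by
            simp [hg'supp i hi])).symm
        rw [h1, ← Finset.sum_coe_sort S (fun i => g' i • v i), ← hg0]
        exact Finset.sum_congr rfl fun i _ => by simp [hg'def, i.2]
      have hg'j : g' (j : ι) = g j := by simp [hg'def, j.2]
      rcases lt_or_gt_of_ne hgj with hneg | hpos
      · refine key (-g') (fun i hi => by simp [hg'supp i hi]) (by
          simp only [Pi.neg_apply, neg_smul, Finset.sum_neg_distrib, hg'sum, neg_zero])
          ⟨j, by simp only [Pi.neg_apply]; rw [hg'j]; linarith⟩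
      · exact key g' hg'supp hg'sum ⟨j, by rw [hg'j]; exact hpos⟩

private lemma cone_isClosed {E : Type*} [NormedAddCommGroup E] [NormedSpace ℝ E]
    [FiniteDimensional ℝ E] {ι : Type*} [Fintype ι] (v : ι → E) :
    IsClosed {y : E | ∃ c : ι → ℝ, (∀ i, 0 ≤ c i) ∧ y = ∑ i, c i • v i} := by
  classical
  have hset : {y : E | ∃ c : ι → ℝ, (∀ i, 0 ≤ c i) ∧ y = ∑ i, c i • v i}
      = ⋃ (S : {S : Finset ι // LinearIndependent ℝ (fun i : S => v i)}),
          (fun c : ↥S.1 → ℝ => ∑ i, c i • v ↑i) '' {c | ∀ i, 0 ≤ c i} := by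
    ext y
    constructor
    · rintro ⟨c, hc, rfl⟩
      obtain ⟨S, c', hc', hsupp, hli, hsum⟩ := cone_caratheodory v ((Finset.univ.filter fun i => c i ≠ 0).card) c hc le_rfl
      refine Set.mem_iUnion.2 ⟨⟨S, hli⟩, ⟨fun i => c' ↑i, fun i => hc' ↑i, ?_⟩⟩
      show (∑ i : {x // x ∈ S}, c' ↑i • v ↑i) = _
      rw [← hsum]
      rw [Finset.sum_coe_sort S (fun i => c' i • v i)]
      exact Finset.sum_subset (Finset.subset_univ S) fun i _ hi => by simp [hsupp i hi]
    · rintro hy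
      obtain ⟨⟨S, hli⟩, c, hc, rfl⟩ := Set.mem_iUnion.1 hy
      refine ⟨fun i => if h : i ∈ S then c ⟨i, h⟩ else 0, fun i => ?_, ?_⟩
      · by_cases h : i ∈ S
        · simp only [dif_pos h]; exact hc _
        · simp [h]
      · rw [← Finset.sum_subset (Finset.subset_univ S) (f := fun i =>
            (if h : i ∈ S then c ⟨i, h⟩ else 0) • v i) (fun i _ hi => by simp [hi]),
          ← Finset.sum_coe_sort S]
        exact Finset.sum_congr rfl fun i _ => by simp [i.2]
  rw [hset]
  refine isClosed_iUnion_of_finite fun S => ?_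
  have hT : (fun c : ↥S.1 → ℝ => ∑ i, c i • v ↑i)
      = (Fintype.linearCombination ℝ (fun i : ↥S.1 => v ↑i)) := by
    ext c
    simp [Fintype.linearCombination_apply]
  rw [hT]
  have hker : LinearMap.ker (Fintype.linearCombination ℝ (fun i : ↥S.1 => v ↑i)) = ⊥ := by
    rw [LinearMap.ker_eq_bot']
    intro m hm
    rw [Fintype.linearCombination_apply] at hm
    exact funext (Fintype.linearIndependent_iff.mp S.2 m hm)
  have hemb := LinearMap.isClosedEmbedding_of_injective hker
  refine hemb.isClosedMap _ ?_
  have : {c : ↥S.1 → ℝ | ∀ i, 0 ≤ c i} = ⋂ i, {c | 0 ≤ c i} := by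
    ext c; simp [Set.mem_iInter]
  rw [this]
  exact isClosed_iInter fun i => isClosed_le continuous_const (continuous_apply i)


theorem stmt_10 (t r s : ℕ) (hs : 1 ≤ s) (hsr : s ≤ r)
    (A : Fin r → Fin t → ℝ) (b : Fin r → ℝ)
    (z : Fin r → ℕ) (hz : ∀ i : Fin r, i.val < s → 0 < z i)
    (h : ∀ ε : ℝ, 0 < ε → ∃ x : Fin t → ℝ,
      (∀ i : Fin r, i.val < s → -((z i : ℝ) * ε) < ∑ j, A i j * x j + b i) ∧
      (∀ i : Fin r, s ≤ i.val → 0 ≤ ∑ j, A i j * x j + b i)) :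
    ∃ x : Fin t → ℝ, ∀ i : Fin r, 0 ≤ ∑ j, A i j * x j + b i := by
  classical
  set v : (Fin t ⊕ Fin t ⊕ Fin r) → (Fin r → ℝ) :=
    Sum.elim (fun j => fun k => A k j)
      (Sum.elim (fun j => fun k => -A k j) (fun i => -Pi.single i (1 : ℝ))) with hv
  have heval : ∀ (c : (Fin t ⊕ Fin t ⊕ Fin r) → ℝ) (k : Fin r),
      (∑ i, c i • v i) k
        = ∑ j, (c (Sum.inl j) - c (Sum.inr (Sum.inl j))) * A k j - c (Sum.inr (Sum.inr k)) := by
    intro c k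
    have h1 : (∑ i, c i • v i) k = ∑ i, c i * v i k := by
      rw [Finset.sum_apply]
      exact Finset.sum_congr rfl fun i _ => rfl
    rw [h1, Fintype.sum_sum_type, Fintype.sum_sum_type]
    simp only [hv, Sum.elim_inl, Sum.elim_inr, Pi.neg_apply]
    have hsingle : ∑ i : Fin r, c (Sum.inr (Sum.inr i)) * -((Pi.single i (1 : ℝ) : Fin r → ℝ) k)
        = -c (Sum.inr (Sum.inr k)) := by
      rw [Finset.sum_eq_single k]
      · simp
      · intro i _ hik
        simp [Pi.single_apply, (hik.symm : k ≠ i)]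
      · simp
    rw [hsingle]
    simp only [sub_mul, mul_neg]
    rw [Finset.sum_sub_distrib, Finset.sum_neg_distrib]
    ring
  have hC := cone_isClosed v
  have hmem : -b ∈ {y : Fin r → ℝ | ∃ c : (Fin t ⊕ Fin t ⊕ Fin r) → ℝ,
      (∀ i, 0 ≤ c i) ∧ y = ∑ i, c i • v i} := by
    rw [← hC.closure_eq, Metric.mem_closure_iff]
    intro δ hδ
    set Z : ℝ := (∑ i, (z i : ℝ)) + 1 with hZdef
    have hZ : 0 < Z := by positivity
    set ε : ℝ := δ / (2 * Z) with hεdef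
    have hε : 0 < ε := by positivity
    obtain ⟨x, hx1, hx2⟩ := h ε hε
    set y : Fin r → ℝ := fun i => ∑ j, A i j * x j + b i with hydef
    refine ⟨(fun i => min (y i) 0) - b, ?_, ?_⟩
    · refine ⟨Sum.elim (fun j => max (x j) 0)
        (Sum.elim (fun j => max (-x j) 0) (fun i => y i - min (y i) 0)), ?_, ?_⟩
      · rintro (j | j | i)
        · exact le_max_right _ _
        · exact le_max_right _ _
        · simp only [Sum.elim_inr, sub_nonneg]
          exact min_le_left _ _
      · funext k
        rw [heval]
        simp only [Sum.elim_inl, Sum.elim_inr, Pi.sub_apply]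
        have hmax : ∀ j, max (x j) 0 - max (-x j) 0 = x j := fun j =>
          max_zero_sub_max_neg_zero_eq_self (x j)
        have hsum : ∑ j, (max (x j) 0 - max (-x j) 0) * A k j = ∑ j, A k j * x j := by
          refine Finset.sum_congr rfl fun j _ => ?_
          rw [hmax j, mul_comm]
        rw [hsum]
        have : y k = ∑ j, A k j * x j + b k := rfl
        linarith [this]
    · rw [dist_pi_lt_iff hδ]
      intro k
      have hdk : dist (-b k) (((fun i => min (y i) 0) - b) k) = |min (y k) 0| := by
        simp only [Pi.sub_apply, Real.dist_eq]
        rw [show -b k - (min (y k) 0 - b k) = -(min (y k) 0) by ring, abs_neg]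
      rw [Pi.neg_apply, hdk]
      rcases lt_or_ge k.val s with hk | hk
      · have h1 := hx1 k hk
        have hzk : (0 : ℝ) < z k := by exact_mod_cast hz k hk
        have hzkZ : (z k : ℝ) < Z := by
          have : (z k : ℝ) ≤ ∑ i, (z i : ℝ) :=
            Finset.single_le_sum (f := fun i => (z i : ℝ)) (fun i _ => by positivity) (Finset.mem_univ k)
          linarith
        have hZε : Z * ε = δ / 2 := by
          rw [hεdef]; field_simp
        have habs : |min (y k) 0| < (z k : ℝ) * ε := by
          rw [abs_lt]
          constructor
          · have : -((z k : ℝ) * ε) < min (y k) 0 := lt_min h1 (by nlinarith)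
            linarith
          · have : min (y k) 0 ≤ 0 := min_le_right _ _
            nlinarith
        nlinarith
      · have h2 := hx2 k hk
        have : min (y k) 0 = 0 := min_eq_right (by exact h2)
        rw [this]
        simpa using hδ
  obtain ⟨c, hc, hbc⟩ := hmem
  refine ⟨fun j => c (Sum.inl j) - c (Sum.inr (Sum.inl j)), fun i => ?_⟩
  have := congrFun hbc i
  rw [heval] at this
  have hsum : ∑ j, (c (Sum.inl j) - c (Sum.inr (Sum.inl j))) * A i j
      = ∑ j, A i j * (c (Sum.inl j) - c (Sum.inr (Sum.inl j))) :=
    Finset.sum_congr rfl fun j _ => mul_comm _ _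
  rw [hsum] at this
  rw [Pi.neg_apply] at this
  have := hc (Sum.inr (Sum.inr i))
  linarith
end

section
/- (Buneman–Simões-Pereira–Zaretskii, necessity direction) Let T be a finite tree with positive edge weights and let D(i,j) denote the weight of the unique path between vertices i and j. Then D satisfies the triangle inequalities, and for any four vertices i,j,k,h, the maximum of the three sums D(i,j)+D(k,h), D(i,k)+D(j,h), D(i,h)+D(k,j) is attained at least twice. -/
open SimpleGraph

set_option linter.unusedSectionVars false
set_option maxHeartbeats 1000000

section BSZ

variable {V : Type} [Fintype V]

/-- Reachability after deleting the edge `e`. -/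
def Rch (G : SimpleGraph V) (e : Sym2 V) (a b : V) : Prop :=
  (G.deleteEdges {e}).Reachable a b

lemma rch_refl (G : SimpleGraph V) (e : Sym2 V) (a : V) : Rch G e a a := Reachable.refl a
lemma rch_symm {G : SimpleGraph V} {e : Sym2 V} {a b : V} (h : Rch G e a b) : Rch G e b a := h.symm
lemma rch_trans {G : SimpleGraph V} {e : Sym2 V} {a b c : V} (h : Rch G e a b)
    (h2 : Rch G e b c) : Rch G e a c := h.trans h2

lemma edges_mapLe {G G' : SimpleGraph V} (h : G ≤ G') {u v : V} (p : G.Walk u v) :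
    (p.mapLe h).edges = p.edges := by
  induction p with
  | nil => rfl
  | cons ha p ih =>
    simp only [Walk.mapLe, Walk.map_cons, Walk.edges_cons] at *
    rw [ih]
    rfl

lemma mem_edges_iff {G : SimpleGraph V} (hT : G.IsTree) {i j : V}
    {p : G.Walk i j} (hp : p.IsPath) (e : Sym2 V) :
    e ∈ p.edges ↔ ¬ Rch G e i j := by
  classical
  constructor
  · intro he hr
    obtain ⟨W⟩ := hr
    set q := W.toPath with hq
    have hq' : ((q : (G.deleteEdges {e}).Walk i j).mapLe (G.deleteEdges_le (s := {e}))).IsPath :=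
      q.2.mapLe _
    have heq := (hT.existsUnique_path i j).unique hq' hp
    have he' : e ∈ (q : (G.deleteEdges {e}).Walk i j).edges := by
      rw [← edges_mapLe (G.deleteEdges_le (s := {e})), heq]; exact he
    have := (q : (G.deleteEdges {e}).Walk i j).edges_subset_edgeSet he'
    rw [SimpleGraph.edgeSet_deleteEdges] at this
    simp at this
  · intro hr
    by_contra he
    exact hr ⟨p.toDeleteEdges {e} (by intro f hf; simp; rintro rfl; exact he hf)⟩

lemma not_rch_adj {G : SimpleGraph V} (hT : G.IsTree) {u v : V} (h : G.Adj u v) :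
    ¬ Rch G s(u, v) u v := by
  have hp : (Walk.cons h Walk.nil).IsPath := by simp [h.ne]
  exact (mem_edges_iff hT hp s(u, v)).1 (by simp)

lemma reach_side {G : SimpleGraph V} {u v : V} {a b : V} (p : G.Walk a b)
    (h : ¬ Rch G s(u, v) a b) :
    (Rch G s(u,v) a u ∧ Rch G s(u,v) v b) ∨ (Rch G s(u,v) a v ∧ Rch G s(u,v) u b) := by
  induction p with
  | nil => exact absurd (rch_refl G _ _) h
  | @cons a c b hadj p ih =>
    by_cases hfe : s(a, c) = s(u, v)
    · rw [Sym2.eq_iff] at hfe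
      by_cases hr : Rch G s(u,v) c b
      · rcases hfe with ⟨hu, hv⟩ | ⟨hu, hv⟩
        · subst hu; subst hv; exact Or.inl ⟨rch_refl G _ _, hr⟩
        · subst hu; subst hv; exact Or.inr ⟨rch_refl G _ _, hr⟩
      · rcases ih hr with ⟨h1, h2⟩ | ⟨h1, h2⟩ <;> rcases hfe with ⟨hu, hv⟩ | ⟨hu, hv⟩ <;>
          subst hu <;> subst hv
        · exact absurd h2 hr
        · exact absurd h2 h
        · exact absurd h2 h
        · exact absurd h2 hr
    · have hac : Rch G s(u,v) a c :=
        ⟨Walk.cons (by rw [SimpleGraph.deleteEdges_adj]; exact ⟨hadj, by simpa using hfe⟩)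
          Walk.nil⟩
      have hr : ¬ Rch G s(u,v) c b := fun hcb => h (hac.trans hcb)
      rcases ih hr with ⟨h1, h2⟩ | ⟨h1, h2⟩
      · exact Or.inl ⟨hac.trans h1, h2⟩
      · exact Or.inr ⟨hac.trans h1, h2⟩

lemma rch_cotrans {G : SimpleGraph V} (hT : G.IsTree) {e : Sym2 V} (he : e ∈ G.edgeSet)
    {a b c : V} (hab : ¬ Rch G e a b) (hbc : ¬ Rch G e b c) : Rch G e a c := by
  induction e using Sym2.ind with
  | _ u v =>
    have hadj : G.Adj u v := he
    have huv : ¬ Rch G s(u,v) u v := not_rch_adj hT hadj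
    obtain ⟨p⟩ := hT.isConnected.1 a b
    obtain ⟨q⟩ := hT.isConnected.1 b c
    rcases reach_side p hab with ⟨h1, h2⟩ | ⟨h1, h2⟩ <;>
      rcases reach_side q hbc with ⟨h3, h4⟩ | ⟨h3, h4⟩
    · exact absurd (rch_symm (h2.trans h3)) huv
    · exact h1.trans h4
    · exact h1.trans h4
    · exact absurd (h2.trans h3) huv

lemma D_formula {G : SimpleGraph V} [Fintype G.edgeSet]
    [∀ e a b, Decidable (Rch G e a b)] (hT : G.IsTree) (w : Sym2 V → ℝ)
    (D : V → V → ℝ)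
    (hD : ∀ (i j : V) (p : G.Walk i j), p.IsPath → D i j = (p.edges.map w).sum)
    (i j : V) :
    D i j = ∑ e ∈ G.edgeFinset, if Rch G e i j then 0 else w e := by
  classical
  obtain ⟨p, hp⟩ := (hT.existsUnique_path i j).exists
  rw [hD i j p hp, ← List.sum_toFinset w hp.edges_nodup]
  have hsub : p.edges.toFinset ⊆ G.edgeFinset := by
    intro e he
    rw [mem_edgeFinset]
    exact p.edges_subset_edgeSet (List.mem_toFinset.1 he)
  have h2 : ∀ e ∈ G.edgeFinset, (if Rch G e i j then 0 else w e)
      = (if e ∈ p.edges then w e else 0) := by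
    intro e _
    by_cases hr : Rch G e i j
    · rw [if_pos hr, if_neg (fun hm => (mem_edges_iff hT hp e).1 hm hr)]
    · rw [if_neg hr, if_pos ((mem_edges_iff hT hp e).2 hr)]
  rw [Finset.sum_congr rfl h2,
    ← Finset.sum_subset hsub (fun x _ hnx => if_neg (by simpa using hnx))]
  exact (Finset.sum_congr rfl fun e he => (if_pos (List.mem_toFinset.1 he))).symm

lemma inc {G : SimpleGraph V} (hT : G.IsTree) (f : Sym2 V) {e : Sym2 V} {i j k h : V}
    (h1 : Rch G e i j) (h2 : Rch G e k h) (h3 : ¬ Rch G e i k)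
    (h4 : ¬ Rch G f i j) (h5 : ¬ Rch G f k h) : False := by
  classical
  induction f using Sym2.ind with
  | _ x y =>
    have reach : ∀ a b : V, Rch G e a b → ¬ Rch G s(x,y) a b → Rch G e a x := by
      intro a b hab hnab
      obtain ⟨p, hp⟩ := (hT.existsUnique_path a b).exists
      have hfp : s(x,y) ∈ p.edges := (mem_edges_iff hT hp _).2 hnab
      have hep : e ∉ p.edges := fun hc => (mem_edges_iff hT hp e).1 hc hab
      have hx : x ∈ p.support := p.fst_mem_support_of_mem_edges hfp
      exact ⟨(p.takeUntil x hx).toDeleteEdges {e}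
        (fun e' he' => by
          simp only [Set.mem_singleton_iff]
          rintro rfl
          exact hep (p.edges_takeUntil_subset hx he'))⟩
    have hix : Rch G e i x := reach i j h1 h4
    have hkx : Rch G e k x := reach k h h2 h5
    exact h3 (hix.trans hkx.symm)

lemma perEdge {V : Type} (R : V → V → Prop) (hrefl : ∀ a, R a a)
    (hsymm : ∀ {a b}, R a b → R b a)
    (htrans : ∀ {a b c}, R a b → R b c → R a c)
    (hco : ∀ {a b c}, ¬R a b → ¬R b c → R a c)
    (c : ℝ) (i j k h : V) [∀ a b, Decidable (R a b)] :
    ((if R i k then 0 else c) + (if R j h then 0 else c))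
      - ((if R i j then 0 else c) + (if R k h then 0 else c))
    = (if R i j ∧ R k h ∧ ¬ R i k then 2*c else 0)
      - (if R i k ∧ R j h ∧ ¬ R i j then 2*c else 0) := by
  have key : ∀ a b, R a b ↔ (R i a ↔ R i b) := by
    intro a b
    constructor
    · intro h'
      exact ⟨fun hia => htrans hia h', fun hib => htrans hib (hsymm h')⟩
    · intro hiff
      by_cases hia : R i a
      · exact htrans (hsymm hia) (hiff.1 hia)
      · exact hco (fun hai => hia (hsymm hai)) (fun hib => hia (hiff.2 hib))
  have hjh := key j h
  have hkh := key k h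
  by_cases pj : R i j <;> by_cases pk : R i k <;> by_cases ph : R i h <;>
    simp [hjh, hkh, pj, pk, ph] <;> ring

end BSZ

theorem stmt_19 {V : Type} [Fintype V] (G : SimpleGraph V) (hT : G.IsTree)
    (w : Sym2 V → ℝ) (hw : ∀ e ∈ G.edgeSet, 0 < w e)
    (D : V → V → ℝ)
    (hD : ∀ (i j : V) (p : G.Walk i j), p.IsPath → D i j = (p.edges.map w).sum) :
    (∀ i j k : V, D i j ≤ D i k + D k j) ∧
    ∀ i j k h : V,
      (D i j + D k h = D i k + D j h ∧ D i h + D k j ≤ D i j + D k h) ∨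
      (D i j + D k h = D i h + D k j ∧ D i k + D j h ≤ D i j + D k h) ∨
      (D i k + D j h = D i h + D k j ∧ D i j + D k h ≤ D i k + D j h) := by
  classical
  haveI : Fintype G.edgeSet := Fintype.ofFinite _
  have hDf : ∀ a b, D a b = ∑ e ∈ G.edgeFinset, if Rch G e a b then 0 else w e :=
    fun a b => D_formula hT w D hD a b
  have hwpos : ∀ e ∈ G.edgeFinset, 0 < w e := fun e he => hw e (mem_edgeFinset.1 he)
  have hcoE : ∀ e ∈ G.edgeFinset, ∀ {a b c : V},
      ¬Rch G e a b → ¬Rch G e b c → Rch G e a c :=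
    fun e he => fun {a b c} hab hbc => rch_cotrans hT (mem_edgeFinset.1 he) hab hbc
  constructor
  · -- triangle inequality
    intro i j k
    rw [hDf i j, hDf i k, hDf k j, ← Finset.sum_add_distrib]
    apply Finset.sum_le_sum
    intro e he
    have hwe := hwpos e he
    by_cases hij : Rch G e i j <;> by_cases hik : Rch G e i k <;>
      by_cases hkj : Rch G e k j <;> simp [hij, hik, hkj] <;>
      first
        | linarith
        | exact absurd (rch_trans hik hkj) hij
  · intro i j k h
    -- the three "split" predicates
    have hBA : (D i k + D j h) - (D i j + D k h)
        = (∑ e ∈ G.edgeFinset,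
            if Rch G e i j ∧ Rch G e k h ∧ ¬Rch G e i k then 2*w e else 0)
        - (∑ e ∈ G.edgeFinset,
            if Rch G e i k ∧ Rch G e j h ∧ ¬Rch G e i j then 2*w e else 0) := by
      rw [hDf i k, hDf j h, hDf i j, hDf k h, ← Finset.sum_add_distrib,
        ← Finset.sum_add_distrib, ← Finset.sum_sub_distrib, ← Finset.sum_sub_distrib]
      exact Finset.sum_congr rfl fun e he =>
        perEdge (Rch G e) (rch_refl G e) rch_symm rch_trans (hcoE e he) (w e) i j k h
    have hCA : (D i h + D k j) - (D i j + D k h)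
        = (∑ e ∈ G.edgeFinset,
            if Rch G e i j ∧ Rch G e k h ∧ ¬Rch G e i k then 2*w e else 0)
        - (∑ e ∈ G.edgeFinset,
            if Rch G e i h ∧ Rch G e j k ∧ ¬Rch G e i j then 2*w e else 0) := by
      rw [hDf i h, hDf k j, hDf i j, hDf k h, ← Finset.sum_add_distrib,
        ← Finset.sum_add_distrib, ← Finset.sum_sub_distrib, ← Finset.sum_sub_distrib]
      refine Finset.sum_congr rfl fun e he => ?_
      have base := perEdge (Rch G e) (rch_refl G e) rch_symm rch_trans (hcoE e he)
        (w e) i j h k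
      have e1 : Rch G e k j ↔ Rch G e j k := ⟨rch_symm, rch_symm⟩
      have e2 : Rch G e k h ↔ Rch G e h k := ⟨rch_symm, rch_symm⟩
      have e3 : (Rch G e i j ∧ Rch G e h k ∧ ¬Rch G e i h)
          ↔ (Rch G e i j ∧ Rch G e k h ∧ ¬Rch G e i k) := by
        constructor
        · rintro ⟨a, b, c⟩
          exact ⟨a, rch_symm b, fun hik => c (rch_trans hik (rch_symm b))⟩
        · rintro ⟨a, b, c⟩
          exact ⟨a, rch_symm b, fun hih => c (rch_trans hih (rch_symm b))⟩
      simp only [e3] at base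
      simp only [← e2] at base
      simp only [e1]
      exact base
    have hA0 : 0 ≤ ∑ e ∈ G.edgeFinset,
        if Rch G e i j ∧ Rch G e k h ∧ ¬Rch G e i k then 2*w e else 0 :=
      Finset.sum_nonneg fun e he => by
        have := hwpos e he; split_ifs <;> linarith
    have hB0 : 0 ≤ ∑ e ∈ G.edgeFinset,
        if Rch G e i k ∧ Rch G e j h ∧ ¬Rch G e i j then 2*w e else 0 :=
      Finset.sum_nonneg fun e he => by
        have := hwpos e he; split_ifs <;> linarith
    have hC0 : 0 ≤ ∑ e ∈ G.edgeFinset,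
        if Rch G e i h ∧ Rch G e j k ∧ ¬Rch G e i j then 2*w e else 0 :=
      Finset.sum_nonneg fun e he => by
        have := hwpos e he; split_ifs <;> linarith
    by_cases hEB : ∃ e ∈ G.edgeFinset, Rch G e i k ∧ Rch G e j h ∧ ¬Rch G e i j
    · -- a B-split exists: then no A-split and no C-split; conclude A = C and B ≤ A
      obtain ⟨f, hf, hfB⟩ := hEB
      have hAz : (∑ e ∈ G.edgeFinset,
          if Rch G e i j ∧ Rch G e k h ∧ ¬Rch G e i k then 2*w e else 0) = 0 :=
        Finset.sum_eq_zero fun e he => if_neg fun hSA =>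
          inc hT f hSA.1 hSA.2.1 hSA.2.2 hfB.2.2
            (fun hkh => hfB.2.2 (rch_trans (rch_trans hfB.1 hkh) (rch_symm hfB.2.1)))
      have hCz : (∑ e ∈ G.edgeFinset,
          if Rch G e i h ∧ Rch G e j k ∧ ¬Rch G e i j then 2*w e else 0) = 0 :=
        Finset.sum_eq_zero fun e he => if_neg fun hSC =>
          inc hT f hSC.1 hSC.2.1 hSC.2.2
            (fun hih => hfB.2.2 (rch_trans hih (rch_symm hfB.2.1)))
            (fun hjk => hfB.2.2 (rch_trans hfB.1 (rch_symm hjk)))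
      exact Or.inr (Or.inl ⟨by linarith, by linarith⟩)
    · by_cases hEC : ∃ e ∈ G.edgeFinset, Rch G e i h ∧ Rch G e j k ∧ ¬Rch G e i j
      · -- a C-split exists: then no A-split and no B-split; conclude A = B and C ≤ A
        obtain ⟨f, hf, hfC⟩ := hEC
        have hAz : (∑ e ∈ G.edgeFinset,
            if Rch G e i j ∧ Rch G e k h ∧ ¬Rch G e i k then 2*w e else 0) = 0 :=
          Finset.sum_eq_zero fun e he => if_neg fun hSA =>
            inc hT f hSA.1 hSA.2.1 hSA.2.2 hfC.2.2
              (fun hkh => hfC.2.2 (rch_trans hfC.1 (rch_symm (rch_trans hfC.2.1 hkh))))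
        have hBz : (∑ e ∈ G.edgeFinset,
            if Rch G e i k ∧ Rch G e j h ∧ ¬Rch G e i j then 2*w e else 0) = 0 :=
          Finset.sum_eq_zero fun e he => if_neg fun hSB => hEB ⟨e, he, hSB⟩
        exact Or.inl ⟨by linarith, by linarith⟩
      · -- no B-split, no C-split: B = C and A ≤ B
        have hBz : (∑ e ∈ G.edgeFinset,
            if Rch G e i k ∧ Rch G e j h ∧ ¬Rch G e i j then 2*w e else 0) = 0 :=
          Finset.sum_eq_zero fun e he => if_neg fun hSB => hEB ⟨e, he, hSB⟩
        have hCz : (∑ e ∈ G.edgeFinset,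
            if Rch G e i h ∧ Rch G e j k ∧ ¬Rch G e i j then 2*w e else 0) = 0 :=
          Finset.sum_eq_zero fun e he => if_neg fun hSC => hEC ⟨e, he, hSC⟩
        exact Or.inr (Or.inr ⟨by linarith, by linarith⟩)
end
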